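/- Let S = (Z₁, …, Zₙ) be a tuple of independent random elements taking values in a measurable space, with g : 𝒵ⁿ → ℝ square-integrable. Then for any δ ∈ (0,1], P{ |g(S) − E[g(S)]| > √((1/δ) · Σᵢ E[Var(g(S) | S^{∖i})]) } ≤ δ, where S^{∖i} denotes all coordinates except the i-th. -/

import Mathlib

open MeasureTheory Real ProbabilityTheory ENNReal Function

/-! Efron–Stein is proved by induction on the number of coordinates. On a product `μ.prod ν`,
the law of total variance gives `Var F = 𝔼_a Var_b F + Var_a (𝔼_b F)`, and Jensen's inequality
applied to `b ↦ F (a, b) - 𝔼_a' F (a', b)` bounds the last term by `𝔼_b Var_a F`. Splitting off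
one coordinate of `Measure.pi μ` and applying the induction hypothesis to the others gives
`Var g ≤ ∑ i, 𝔼 Var_i g`; working with `evariance` keeps integrability out of the induction.
Chebyshev's inequality at level `√(B / δ)`, with `B` the Efron–Stein bound, finishes the proof. -/

namespace MeasureTheory

theorem MeasurePreserving.evariance_comp {Ω Ω' : Type*} [MeasurableSpace Ω]
    [MeasurableSpace Ω'] {μ : Measure Ω} {ν : Measure Ω'} {e : Ω → Ω'}
    (he : MeasurePreserving e μ ν) (he' : MeasurableEmbedding e) (f : Ω' → ℝ) :
    eVar[fun x => f (e x); μ] = eVar[f; ν] := by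
  rw [evariance, evariance, he.integral_comp he' f]
  exact he.lintegral_comp_emb he' (fun y => ‖f y - ν[f]‖ₑ ^ 2)

theorem measurePreserving_update {ι : Type*} [Fintype ι] [DecidableEq ι]
    {Ω : ι → Type*} [∀ i, MeasurableSpace (Ω i)] (μ : ∀ i, Measure (Ω i))
    [∀ i, SigmaFinite (μ i)] (i : ι) [IsProbabilityMeasure (μ i)] :
    MeasurePreserving (fun p : (∀ j, Ω j) × Ω i => update p.1 i p.2)
      ((Measure.pi μ).prod (μ i)) (Measure.pi μ) := by
  have hU : Measurable fun p : (∀ j, Ω j) × Ω i => update p.1 i p.2 := measurable_update'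
  refine ⟨hU, (Measure.pi_eq fun s hs => ?_).symm⟩
  have hpre : (fun p : (∀ j, Ω j) × Ω i => update p.1 i p.2) ⁻¹' Set.univ.pi s
      = Set.univ.pi (update s i Set.univ) ×ˢ s i := by
    ext ⟨ω, x⟩
    simp only [Set.mem_preimage, Set.mem_univ_pi, Set.mem_prod]
    constructor
    · intro h
      refine ⟨fun j => ?_, by simpa using h i⟩
      rcases eq_or_ne j i with rfl | hj
      · simp
      · simpa [hj] using h j
    · rintro ⟨h, hx⟩ j
      rcases eq_or_ne j i with rfl | hj
      · simpa using hx
      · simpa [hj] using h j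
  have hfactor (j : ι) : μ j (update s i Set.univ j) = update (fun j => μ j (s j)) i 1 j := by
    rcases eq_or_ne j i with rfl | hj
    · simp
    · simp [hj]
  rw [Measure.map_apply hU (MeasurableSet.univ_pi hs), hpre, Measure.prod_prod, Measure.pi_pi,
    Finset.prod_congr rfl fun j _ => hfactor j, Finset.prod_update_of_mem (Finset.mem_univ i),
    one_mul, mul_comm]
  exact (Finset.prod_eq_mul_prod_sdiff_singleton_of_mem (Finset.mem_univ i) fun j => μ j (s j)).symm

theorem lintegral_pi_eq_lintegral_insertNth {n : ℕ} {Ω : Fin (n + 1) → Type*}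
    [∀ i, MeasurableSpace (Ω i)] (μ : ∀ i, Measure (Ω i)) [∀ i, SigmaFinite (μ i)]
    (p : Fin (n + 1)) {f : (∀ i, Ω i) → ℝ≥0∞} (hf : AEMeasurable f (Measure.pi μ)) :
    ∫⁻ ω, f ω ∂Measure.pi μ =
      ∫⁻ a, ∫⁻ r, f (p.insertNth a r) ∂Measure.pi (fun j => μ (p.succAbove j)) ∂μ p := by
  have he := (measurePreserving_piFinSuccAbove μ p).symm
  rw [← he.lintegral_comp_emb (MeasurableEquiv.measurableEmbedding _)]
  exact lintegral_prod _ (hf.comp_quasiMeasurePreserving he.quasiMeasurePreserving)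

namespace MemLp

theorem sq_integral_le_integral_sq {Ω : Type*} [MeasurableSpace Ω] {μ : Measure Ω}
    [IsProbabilityMeasure μ] {f : Ω → ℝ} (hf : MemLp f 2 μ) :
    (∫ x, f x ∂μ) ^ 2 ≤ ∫ x, f x ^ 2 ∂μ := by
  have h := variance_nonneg f μ
  rw [variance_eq_sub hf] at h
  simp only [Pi.pow_apply] at h
  linarith

section Sections

variable {α β : Type*} [MeasurableSpace α] [MeasurableSpace β] {μ : Measure α} {ν : Measure β}
  {F : α × β → ℝ}

theorem ae_memLp_prodMk_left [SFinite μ] [SFinite ν] (hF : MemLp F 2 (μ.prod ν)) :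
    ∀ᵐ a ∂μ, MemLp (fun b => F (a, b)) 2 ν := by
  filter_upwards [hF.1.prodMk_left, hF.integrable_sq.prod_right_ae] with a hm hsq
  exact (memLp_two_iff_integrable_sq hm).2 hsq

section

variable [SFinite μ] [IsProbabilityMeasure ν]

theorem variance_prodMk_left_ae_eq (hF : MemLp F 2 (μ.prod ν)) :
    (fun a => Var[fun b => F (a, b); ν])
      =ᵐ[μ] fun a => ∫ b, F (a, b) ^ 2 ∂ν - (∫ b, F (a, b) ∂ν) ^ 2 := by
  filter_upwards [hF.ae_memLp_prodMk_left] with a ha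
  rw [variance_eq_sub ha]
  rfl

theorem integral_prodMk_left (hF : MemLp F 2 (μ.prod ν)) :
    MemLp (fun a => ∫ b, F (a, b) ∂ν) 2 μ := by
  refine (memLp_two_iff_integrable_sq hF.1.integral_prod_right').2 ?_
  refine hF.integrable_sq.integral_prod_left.mono' (hF.1.integral_prod_right'.pow 2) ?_
  filter_upwards [hF.ae_memLp_prodMk_left] with a ha
  rw [Real.norm_of_nonneg (sq_nonneg _)]
  exact ha.sq_integral_le_integral_sq

theorem integrable_variance_prodMk_left (hF : MemLp F 2 (μ.prod ν)) :
    Integrable (fun a => Var[fun b => F (a, b); ν]) μ :=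
  (hF.integrable_sq.integral_prod_left.sub hF.integral_prodMk_left.integrable_sq).congr
    hF.variance_prodMk_left_ae_eq.symm

theorem aemeasurable_evariance_prodMk_left (hF : MemLp F 2 (μ.prod ν)) :
    AEMeasurable (fun a => eVar[fun b => F (a, b); ν]) μ :=
  hF.integrable_variance_prodMk_left.aemeasurable.ennreal_ofReal.congr
    (hF.ae_memLp_prodMk_left.mono fun _ ha => ha.ofReal_variance_eq)

theorem ofReal_integral_variance_prodMk_left (hF : MemLp F 2 (μ.prod ν)) :
    ENNReal.ofReal (∫ a, Var[fun b => F (a, b); ν] ∂μ) =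
      ∫⁻ a, eVar[fun b => F (a, b); ν] ∂μ := by
  rw [ofReal_integral_eq_lintegral_ofReal hF.integrable_variance_prodMk_left
    (.of_forall fun _ => variance_nonneg _ _)]
  exact lintegral_congr_ae (hF.ae_memLp_prodMk_left.mono fun _ ha => ha.ofReal_variance_eq)

end

variable [IsProbabilityMeasure μ] [IsProbabilityMeasure ν]

theorem variance_prod_eq (hF : MemLp F 2 (μ.prod ν)) :
    Var[F; μ.prod ν] =
      ∫ a, Var[fun b => F (a, b); ν] ∂μ + Var[fun a => ∫ b, F (a, b) ∂ν; μ] := by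
  have hh := hF.integral_prodMk_left
  rw [variance_eq_sub hF, variance_eq_sub hh, integral_congr_ae hF.variance_prodMk_left_ae_eq,
    integral_sub hF.integrable_sq.integral_prod_left hh.integrable_sq,
    ← integral_prod F (hF.integrable one_le_two)]
  simp only [Pi.pow_apply]
  rw [integral_prod _ hF.integrable_sq]
  ring

theorem variance_integral_prodMk_left_le (hF : MemLp F 2 (μ.prod ν)) :
    Var[fun a => ∫ b, F (a, b) ∂ν; μ] ≤ ∫ b, Var[fun a => F (a, b); μ] ∂ν := by
  set M := ∫ p, F p ∂μ.prod ν
  set k : β → ℝ := fun b => ∫ a, F (a, b) ∂μ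
  have hk : MemLp k 2 ν :=
    (hF.comp_measurePreserving Measure.measurePreserving_swap).integral_prodMk_left
  have hD : MemLp (fun p : α × β => F p - k p.2) 2 (μ.prod ν) :=
    hF.sub (hk.comp_measurePreserving measurePreserving_snd)
  have hkM : ∫ b, k b ∂ν = M := (integral_prod_symm F (hF.integrable one_le_two)).symm
  have hhM : ∫ a, ∫ b, F (a, b) ∂ν ∂μ = M := (integral_prod F (hF.integrable one_le_two)).symm
  have hjensen : ∀ᵐ a ∂μ, ((∫ b, F (a, b) ∂ν) - M) ^ 2 ≤ ∫ b, (F (a, b) - k b) ^ 2 ∂ν := by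
    filter_upwards [hF.ae_memLp_prodMk_left] with a ha
    have hmean : ∫ b, (F (a, b) - k b) ∂ν = (∫ b, F (a, b) ∂ν) - M := by
      rw [integral_sub (ha.integrable one_le_two) (hk.integrable one_le_two), hkM]
    rw [← hmean]
    exact (ha.sub hk).sq_integral_le_integral_sq
  have hvariance : (fun b => ∫ a, (F (a, b) - k b) ^ 2 ∂μ)
      =ᵐ[ν] fun b => Var[fun a => F (a, b); μ] := by
    filter_upwards [hF.1.prodMk_right] with b hb
    rw [variance_eq_integral hb.aemeasurable]
  calc Var[fun a => ∫ b, F (a, b) ∂ν; μ]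
      = ∫ a, ((∫ b, F (a, b) ∂ν) - M) ^ 2 ∂μ := by
        rw [variance_eq_integral hF.integral_prodMk_left.aemeasurable, hhM]
    _ ≤ ∫ a, ∫ b, (F (a, b) - k b) ^ 2 ∂ν ∂μ :=
        integral_mono_ae ((hF.integral_prodMk_left.sub (memLp_const M)).integrable_sq)
          hD.integrable_sq.integral_prod_left hjensen
    _ = ∫ b, ∫ a, (F (a, b) - k b) ^ 2 ∂μ ∂ν := integral_integral_swap hD.integrable_sq
    _ = ∫ b, Var[fun a => F (a, b); μ] ∂ν := integral_congr_ae hvariance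

theorem variance_prod_le (hF : MemLp F 2 (μ.prod ν)) :
    Var[F; μ.prod ν] ≤
      ∫ a, Var[fun b => F (a, b); ν] ∂μ + ∫ b, Var[fun a => F (a, b); μ] ∂ν := by
  rw [hF.variance_prod_eq]
  gcongr
  exact hF.variance_integral_prodMk_left_le

theorem evariance_prod_le (hF : MemLp F 2 (μ.prod ν)) :
    eVar[F; μ.prod ν] ≤
      ∫⁻ a, eVar[fun b => F (a, b); ν] ∂μ + ∫⁻ b, eVar[fun a => F (a, b); μ] ∂ν := by
  have hswap := (hF.comp_measurePreserving
    Measure.measurePreserving_swap).ofReal_integral_variance_prodMk_left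
  simp only [comp_apply, Prod.swap_prod_mk] at hswap
  rw [← hF.ofReal_variance_eq, ← hF.ofReal_integral_variance_prodMk_left, ← hswap]
  exact (ofReal_le_ofReal hF.variance_prod_le).trans ofReal_add_le

end Sections

section EfronStein

variable {n : ℕ} {Ω : Fin n → Type*} [∀ i, MeasurableSpace (Ω i)]
  {μ : ∀ i, Measure (Ω i)} [∀ i, IsProbabilityMeasure (μ i)] {g : (∀ i, Ω i) → ℝ}

theorem comp_update {p : ℝ≥0∞} (hg : MemLp g p (Measure.pi μ)) (i : Fin n) :
    MemLp (fun q : (∀ j, Ω j) × Ω i => g (update q.1 i q.2)) p ((Measure.pi μ).prod (μ i)) :=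
  hg.comp_measurePreserving (measurePreserving_update μ i)

theorem evariance_pi_le_sum (hg : MemLp g 2 (Measure.pi μ)) :
    eVar[g; Measure.pi μ] ≤
      ∑ i, ∫⁻ ω, eVar[fun x => g (update ω i x); μ i] ∂Measure.pi μ := by
  induction n with
  | zero =>
    have hc : g = fun _ => g isEmptyElim := funext fun ω => congrArg g (Subsingleton.elim _ _)
    rw [hc]
    simp [evariance]
  | succ n ih =>
    set P := Measure.pi fun j => μ ((0 : Fin (n + 1)).succAbove j)
    have he := (measurePreserving_piFinSuccAbove μ 0).symm
    set G : Ω 0 × (∀ j, Ω ((0 : Fin (n + 1)).succAbove j)) → ℝ :=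
      fun p => g (Fin.insertNth 0 p.1 p.2)
    have hG : MemLp G 2 ((μ 0).prod P) := hg.comp_measurePreserving he
    have hΦ (i : Fin (n + 1)) :
        AEMeasurable (fun ω => eVar[fun x => g (update ω i x); μ i]) (Measure.pi μ) :=
      (hg.comp_update i).aemeasurable_evariance_prodMk_left
    have hfirst : ∫⁻ r, eVar[fun a => G (a, r); μ 0] ∂P =
        ∫⁻ ω, eVar[fun x => g (update ω 0 x); μ 0] ∂Measure.pi μ := by
      rw [lintegral_pi_eq_lintegral_insertNth μ 0 (hΦ 0)]
      simp only [Fin.update_insertNth, lintegral_const, measure_univ, mul_one, G]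
      rfl
    have hrest : ∫⁻ a, eVar[fun r => G (a, r); P] ∂μ 0 ≤
        ∑ j, ∫⁻ ω, eVar[fun y => g (update ω ((0 : Fin (n + 1)).succAbove j) y);
          μ ((0 : Fin (n + 1)).succAbove j)] ∂Measure.pi μ := by
      calc ∫⁻ a, eVar[fun r => G (a, r); P] ∂μ 0
          ≤ ∫⁻ a, ∑ j, ∫⁻ r, eVar[fun y => g (update (Fin.insertNth 0 a r)
              ((0 : Fin (n + 1)).succAbove j) y); μ ((0 : Fin (n + 1)).succAbove j)] ∂P ∂μ 0 :=
            lintegral_mono_ae (hG.ae_memLp_prodMk_left.mono fun a ha => by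
              simpa only [G, Fin.insertNth_update] using ih ha)
        _ = _ := by
            refine (lintegral_finsetSum' _ fun j _ => ?_).trans
              (Finset.sum_congr rfl fun j _ =>
                (lintegral_pi_eq_lintegral_insertNth μ 0 (hΦ _)).symm)
            exact ((hΦ _).comp_quasiMeasurePreserving
              he.quasiMeasurePreserving).lintegral_prod_right'
    calc eVar[g; Measure.pi μ] = eVar[G; (μ 0).prod P] :=
          (he.evariance_comp (MeasurableEquiv.measurableEmbedding _) g).symm
      _ ≤ ∫⁻ a, eVar[fun r => G (a, r); P] ∂μ 0 + ∫⁻ r, eVar[fun a => G (a, r); μ 0] ∂P :=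
          hG.evariance_prod_le
      _ ≤ _ := by
          rw [Fin.sum_univ_succAbove _ 0, hfirst, add_comm]
          gcongr

theorem variance_pi_le_sum (hg : MemLp g 2 (Measure.pi μ)) :
    Var[g; Measure.pi μ] ≤ ∑ i, ∫ ω, Var[fun x => g (update ω i x); μ i] ∂Measure.pi μ := by
  have hnonneg (i : Fin n) : 0 ≤ ∫ ω, Var[fun x => g (update ω i x); μ i] ∂Measure.pi μ :=
    integral_nonneg fun _ => variance_nonneg _ _
  rw [← ofReal_le_ofReal_iff (Finset.sum_nonneg fun i _ => hnonneg i), hg.ofReal_variance_eq,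
    ofReal_sum_of_nonneg fun i _ => hnonneg i]
  simp_rw [(hg.comp_update _).ofReal_integral_variance_prodMk_left]
  exact hg.evariance_pi_le_sum

end EfronStein

end MemLp

end MeasureTheory

theorem ProbabilityTheory.meas_lt_abs_sub_le_of_variance_le {Ω : Type*} [MeasurableSpace Ω]
    {μ : Measure Ω} [IsFiniteMeasure μ] {X : Ω → ℝ} (hX : MemLp X 2 μ) {c δ : ℝ} (hc : 0 ≤ c)
    (hvar : Var[X; μ] ≤ δ * c ^ 2) :
    μ {ω | c < |X ω - μ[X]|} ≤ ENNReal.ofReal δ := by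
  rcases hc.eq_or_lt with rfl | hc
  · have hzero : Var[X; μ] = 0 := le_antisymm (by simpa using hvar) (variance_nonneg _ _)
    refine le_of_eq_of_le (measure_mono_null (fun ω hω => ?_)
      (ae_iff.1 (ae_eq_integral_of_variance_eq_zero hX hzero))) zero_le
    exact sub_ne_zero.1 (abs_pos.1 hω)
  · calc μ {ω | c < |X ω - μ[X]|} ≤ μ {ω | c ≤ |X ω - μ[X]|} :=
          measure_mono <| Set.ofPred_subset_ofPred.2 fun _ => le_of_lt
      _ ≤ ENNReal.ofReal (Var[X; μ] / c ^ 2) := meas_ge_le_variance_div_sq hX hc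
      _ ≤ ENNReal.ofReal δ := ofReal_le_ofReal ((div_le_iff₀ (by positivity)).2 hvar)

theorem chebyshev_efron_stein_general {n : ℕ} {Ω : Fin n → Type*}
    [∀ i, MeasurableSpace (Ω i)]
    (μ : ∀ i, Measure (Ω i)) [∀ i, IsProbabilityMeasure (μ i)]
    (g : (∀ i, Ω i) → ℝ) (hg : MemLp g 2 (Measure.pi μ))
    (δ : ℝ) (hδ0 : 0 < δ) :
    (Measure.pi μ) {ω | Real.sqrt ((1 / δ) * ∑ i, ∫ ω',
        (∫ x, (g (Function.update ω' i x)
            - ∫ y, g (Function.update ω' i y) ∂(μ i)) ^ 2 ∂(μ i)) ∂(Measure.pi μ))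
      < |g ω - ∫ ω', g ω' ∂(Measure.pi μ)|}
      ≤ ENNReal.ofReal δ := by
  have hsection (i : Fin n) :
      ∫ ω', ∫ x, (g (update ω' i x) - ∫ y, g (update ω' i y) ∂μ i) ^ 2 ∂μ i ∂Measure.pi μ =
        ∫ ω', Var[fun x => g (update ω' i x); μ i] ∂Measure.pi μ :=
    integral_congr_ae <| (hg.comp_update i).1.prodMk_left.mono fun _ h =>
      (variance_eq_integral h.aemeasurable).symm
  have hB : 0 ≤ ∑ i, ∫ ω', Var[fun x => g (update ω' i x); μ i] ∂Measure.pi μ :=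
    Finset.sum_nonneg fun i _ => integral_nonneg fun _ => variance_nonneg _ _
  simp_rw [hsection]
  refine meas_lt_abs_sub_le_of_variance_le hg (sqrt_nonneg _) ?_
  rw [sq_sqrt (by positivity), one_div, mul_inv_cancel_left₀ hδ0.ne']
  exact hg.variance_pi_le_sum

/-- Chebyshev + Efron–Stein pointwise concentration: the deviation of g(S) from its mean
exceeds √((1/δ)·Σᵢ E[Var(g(S)|S^{∖i})]) with probability at most δ.
Independent coordinates are modelled by a product measure; the conditional variance given
all coordinates except i is the variance over the i-th coordinate. -/
theorem chebyshev_efron_stein {n : ℕ} {Ω : Fin n → Type*}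
    [∀ i, MeasurableSpace (Ω i)]
    (μ : ∀ i, Measure (Ω i)) [∀ i, IsProbabilityMeasure (μ i)]
    (g : (∀ i, Ω i) → ℝ) (hg : MemLp g 2 (Measure.pi μ))
    (δ : ℝ) (hδ0 : 0 < δ) (hδ1 : δ ≤ 1) :
    (Measure.pi μ) {ω | Real.sqrt ((1 / δ) * ∑ i, ∫ ω',
        (∫ x, (g (Function.update ω' i x)
            - ∫ y, g (Function.update ω' i y) ∂(μ i)) ^ 2 ∂(μ i)) ∂(Measure.pi μ))
      < |g ω - ∫ ω', g ω' ∂(Measure.pi μ)|}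
      ≤ ENNReal.ofReal δ :=
  chebyshev_efron_stein_general μ g hg δ hδ0
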